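/- For every Motzkin path mz of width n, the weight ω(mz) depends only on its building sequence a^(mz) = (f_0, p_1, f_1, ..., p_h, f_h); namely, ω(mz) = ∏_{i=0}^{h} (2i+1)^{f_i} · ∏_{i=1}^{h} i^{2 p_i} = perm(a^(mz)). -/

import Mathlib

/-- Moves of a Motzkin path: Up-right, Horizontal-right, Down-right. -/
inductive Move : Type
  | U : Move
  | H : Move
  | D : Move
deriving DecidableEq

open Move

/-- The vertical step of a move. -/
def Move.step : Move → ℤ
  | U => 1
  | H => 0
  | D => -1

/-- The height of a path after its first `i` moves. -/
def heightAt (mz : List Move) (i : ℕ) : ℤ :=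
  ((mz.take i).map Move.step).sum

/-- A word over {U,H,D} is a Motzkin path if it never goes below the x-axis
and ends on the x-axis. -/
def IsMotzkin (mz : List Move) : Prop :=
  (∀ i, 0 ≤ heightAt mz i) ∧ heightAt mz mz.length = 0

/-- The area between the x-axis and the path (sum of heights at integer points). -/
def area (mz : List Move) : ℤ :=
  ∑ i ∈ Finset.range (mz.length + 1), heightAt mz i

/-- `MZ n A` is the set of Motzkin paths of width `n` and area `A`. -/
def MZ (n A : ℕ) : Set (List Move) :=
  {mz | mz.length = n ∧ IsMotzkin mz ∧ area mz = A}

/-- The weight `ω_i` of the `i`-th move (0-indexed): it is `h_i` for U and D moves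
(height after the move for U, before the move for D) and `2h_i + 1` for H moves. -/
def moveWeight (mz : List Move) (i : ℕ) : ℤ :=
  match mz[i]? with
  | some U => heightAt mz (i + 1)
  | some D => heightAt mz i
  | some H => 2 * heightAt mz i + 1
  | none => 1

/-- The weight `ω(mz)` of a Motzkin path. -/
def weight (mz : List Move) : ℤ :=
  ∏ i ∈ Finset.range mz.length, moveWeight mz i

/-- The total displacement `D(π) = Σ_i |i - π(i)|` of a permutation. -/
def totalDisp {n : ℕ} (π : Equiv.Perm (Fin n)) : ℤ :=
  ∑ i : Fin n, |((π i : ℕ) : ℤ) - ((i : ℕ) : ℤ)|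

/-- The word over {U,H,D} associated to a permutation. -/
def toPath {n : ℕ} (π : Equiv.Perm (Fin n)) : List Move :=
  (List.finRange n).map fun i : Fin n =>
    if (i : ℕ) < (π i : ℕ) ∧ (i : ℕ) < (π.symm i : ℕ) then U
    else if (π i : ℕ) < (i : ℕ) ∧ (π.symm i : ℕ) < (i : ℕ) then D
    else H

/-- The last fall length: the length of the maximal suffix consisting of D moves. -/
def lastFall (mz : List Move) : ℕ :=
  (mz.reverse.takeWhile (fun m => decide (m = D))).length

/-- The maximum height of a path. -/
def maxHeight (mz : List Move) : ℕ :=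
  (Finset.range (mz.length + 1)).sup fun i => (heightAt mz i).toNat

/-- `flatsAt mz k` is the number of H moves of `mz` made at height `k`. -/
def flatsAt (mz : List Move) (k : ℕ) : ℕ :=
  ((Finset.range mz.length).filter fun j => mz[j]? = some H ∧ heightAt mz j = (k : ℤ)).card

/-- `peaksAt mz k` is the number of U moves of `mz` ending at height `k`. -/
def peaksAt (mz : List Move) (k : ℕ) : ℕ :=
  ((Finset.range mz.length).filter fun j => mz[j]? = some U ∧ heightAt mz (j + 1) = (k : ℤ)).card

/-- `downsAt mz k` is the number of D moves of `mz` starting at height `k`. -/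
def downsAt (mz : List Move) (k : ℕ) : ℕ :=
  ((Finset.range mz.length).filter fun j => mz[j]? = some D ∧ heightAt mz j = (k : ℤ)).card

/-- A candidate building sequence `(f_0, p_1, f_1, …, p_h, f_h)`, recorded as its
height `h` together with the flat counts `f` and peak counts `p`. -/
structure BSeq where
  h : ℕ
  f : ℕ → ℕ
  p : ℕ → ℕ

/-- `Sset n A` is the set of building sequences for width `n` and area `A`:
all `p`-entries `p_1, …, p_h` are positive, entries beyond the height are zero, and the
width and area conditions hold. -/
def Sset (n A : ℕ) : Set BSeq :=
  {a | (∀ i, 1 ≤ i → i ≤ a.h → 0 < a.p i) ∧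
       a.p 0 = 0 ∧
       (∀ i, a.h < i → a.p i = 0) ∧
       (∀ i, a.h < i → a.f i = 0) ∧
       (∑ i ∈ Finset.range (a.h + 1), a.f i) + 2 * (∑ i ∈ Finset.Icc 1 a.h, a.p i) = n ∧
       (∑ i ∈ Finset.range (a.h + 1), i * a.f i) +
         (∑ i ∈ Finset.Icc 1 a.h, (2 * i - 1) * a.p i) = A}

/-- `mz` has building sequence `a`. -/
def hasBuildSeq (mz : List Move) (a : BSeq) : Prop :=
  maxHeight mz = a.h ∧ (∀ i, flatsAt mz i = a.f i) ∧ (∀ i, peaksAt mz i = a.p i)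

/-- `perm(a) = ∏_{i=0}^h (2i+1)^{f_i} · ∏_{i=1}^h i^{2p_i}`. -/
def permWeight (a : BSeq) : ℕ :=
  (∏ i ∈ Finset.range (a.h + 1), (2 * i + 1) ^ a.f i) *
    ∏ i ∈ Finset.Icc 1 a.h, i ^ (2 * a.p i)

/-- `m(a)`, the number of Motzkin paths with building sequence `a`. -/
def mcount (a : BSeq) : ℕ :=
  Nat.choose (a.f a.h + a.p a.h - 1) (a.p a.h - 1) *
    (∏ i ∈ Finset.Icc 1 (a.h - 1),
      Nat.choose (a.p (i + 1) + a.f i) (a.f i) *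
        Nat.choose (a.p (i + 1) + a.f i + a.p i - 1) (a.p i - 1)) *
    Nat.choose (a.p 1 + a.f 0) (a.f 0)

/-- `M(n,A,l)`: the number of Motzkin paths of width `n`, area `A` and last fall length `l`
(for negative arguments there are no such paths, so the value is `0`; the value at
`(0,0,0)` is `1`, counting the empty path). -/
noncomputable def Mcount (n A l : ℤ) : ℕ :=
  Nat.card {mz : List Move // (mz.length : ℤ) = n ∧ IsMotzkin mz ∧ area mz = A ∧
    (lastFall mz : ℤ) = l}

/-- `D(n,d,l)`: the sum of the weights of all Motzkin paths of width `n`, area `d` and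
last fall length `l`. -/
noncomputable def Dw (n d l : ℤ) : ℤ :=
  ∑ᶠ mz ∈ {mz : List Move | (mz.length : ℤ) = n ∧ IsMotzkin mz ∧ area mz = d ∧
    (lastFall mz : ℤ) = l}, weight mz

/-- `M(n,A,h,p)`: the number of Motzkin paths of width `n`, area `A`, maximum height `h`,
with exactly `p` U-moves ending at height `h` and no H-moves at height `h`. -/
noncomputable def Mtop (n A h p : ℤ) : ℕ :=
  Nat.card {mz : List Move // (mz.length : ℤ) = n ∧ IsMotzkin mz ∧ area mz = A ∧
    (maxHeight mz : ℤ) = h ∧ (peaksAt mz h.toNat : ℤ) = p ∧ flatsAt mz h.toNat = 0}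

/-- `D(n,d,h,p)`: the sum of weights of Motzkin paths of width `n`, area `d`,
maximum height `h`, with exactly `p` U-moves ending at height `h` and no H-moves at height `h`. -/
noncomputable def Dtop (n d h p : ℤ) : ℤ :=
  ∑ᶠ mz ∈ {mz : List Move | (mz.length : ℤ) = n ∧ IsMotzkin mz ∧ area mz = d ∧
    (maxHeight mz : ℤ) = h ∧ (peaksAt mz h.toNat : ℤ) = p ∧ flatsAt mz h.toNat = 0}, weight mz

/-- The area under the first `i` moves of a path (trapezoid rule; may be a half-integer). -/
def prefixArea (mz : List Move) (i : ℕ) : ℚ :=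
  ∑ j ∈ Finset.range i, ((heightAt mz j : ℚ) + (heightAt mz (j + 1) : ℚ)) / 2

/-! Each U move contributes the height `i` it ends at, each D move the height `i` it starts
from, and each H move `2i + 1` for its height `i`. Grouping the moves by these heights writes
`ω(mz)` as `∏ (2i+1)^{f_i} · ∏ i^{p_i} · ∏ i^{d_i}`, where `d_i` counts the D moves starting at
height `i`. A path that returns to the axis crosses each level between `i - 1` and `i` as often
downwards as upwards, so `d_i = p_i`. -/

open Finset

theorem prod_comp_natCast_eq_prod_pow_card {ι M : Type*} [CommMonoid M] {s : Finset ι}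
    {t : Finset ℕ} {g : ι → ℤ} (hg : ∀ i ∈ s, ∃ k ∈ t, g i = k) (f : ℤ → M) :
    ∏ i ∈ s, f (g i) = ∏ k ∈ t, f k ^ #{i ∈ s | g i = k} := by
  have hmaps : ∀ i ∈ s, g i ∈ t.map Nat.castEmbedding := fun i hi => by
    obtain ⟨k, hk, hik⟩ := hg i hi
    exact mem_map.2 ⟨k, hk, hik.symm⟩
  rw [← prod_fiberwise_of_maps_to' hmaps, prod_map]
  simp only [Nat.castEmbedding_apply, prod_const]

theorem exists_natCast_mem_Icc {x : ℤ} {a b : ℕ} (ha : a ≤ x) (hb : x ≤ b) :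
    ∃ k ∈ Icc a b, x = k :=
  ⟨x.toNat, mem_Icc.2 ⟨by omega, by omega⟩, by omega⟩

def moveIndices (mz : List Move) (m : Move) : Finset ℕ :=
  {j ∈ range mz.length | mz[j]? = some m}

section Path

variable {mz : List Move}

theorem mem_moveIndices {m : Move} {j : ℕ} : j ∈ moveIndices mz m ↔ mz[j]? = some m := by
  simp only [moveIndices, mem_filter, mem_range, and_iff_right_iff_imp]
  exact fun h => (List.getElem?_eq_some_iff.1 h).1

theorem lt_length_of_mem_moveIndices {m : Move} {j : ℕ} (hj : j ∈ moveIndices mz m) :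
    j < mz.length :=
  mem_range.1 (mem_filter.1 hj).1

theorem heightAt_zero (mz : List Move) : heightAt mz 0 = 0 := by
  simp [heightAt]

theorem heightAt_succ {j : ℕ} {m : Move} (hm : mz[j]? = some m) :
    heightAt mz (j + 1) = heightAt mz j + m.step := by
  rw [heightAt, List.take_add_one, List.map_append, List.sum_append, hm]
  simp [heightAt]

theorem heightAt_le_maxHeight {i : ℕ} (hi : i ≤ mz.length) : heightAt mz i ≤ maxHeight mz := by
  have : (heightAt mz i).toNat ≤ maxHeight mz :=
    le_sup (f := fun i => (heightAt mz i).toNat) (mem_range.2 (Nat.lt_succ_of_le hi))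
  omega

theorem prod_range_length_eq_prod_moveIndices {M : Type*} [CommMonoid M] (f : ℕ → M) :
    ∏ j ∈ range mz.length, f j =
      (∏ j ∈ moveIndices mz U, f j) * (∏ j ∈ moveIndices mz D, f j) *
        ∏ j ∈ moveIndices mz H, f j := by
  have hmaps : ∀ j ∈ range mz.length,
      mz[j]? ∈ ({some U, some D, some H} : Finset (Option Move)) := by
    intro j hj
    have hj : j < mz.length := mem_range.1 hj
    rw [List.getElem?_eq_getElem hj]
    cases mz[j] <;> simp
  rw [← prod_fiberwise_of_maps_to hmaps]
  simp [moveIndices, mul_assoc]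

theorem weight_eq_prod_moveIndices (mz : List Move) :
    weight mz =
      (∏ j ∈ moveIndices mz U, heightAt mz (j + 1)) * (∏ j ∈ moveIndices mz D, heightAt mz j) *
        ∏ j ∈ moveIndices mz H, (2 * heightAt mz j + 1) := by
  rw [weight, prod_range_length_eq_prod_moveIndices (moveWeight mz)]
  refine congr_arg₂ (· * ·) (congr_arg₂ (· * ·) ?_ ?_) ?_ <;>
    refine prod_congr rfl fun j hj => ?_ <;> simp [moveWeight, mem_moveIndices.1 hj]

theorem peaksAt_eq_downsAt (hend : heightAt mz mz.length = 0) (k : ℕ) :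
    peaksAt mz k = downsAt mz k := by
  have hstep : ∀ j ∈ range mz.length,
      ((if (k : ℤ) ≤ heightAt mz (j + 1) then 1 else 0) -
          (if (k : ℤ) ≤ heightAt mz j then 1 else 0) : ℤ) =
        (if mz[j]? = some U ∧ heightAt mz (j + 1) = k then 1 else 0) -
          (if mz[j]? = some D ∧ heightAt mz j = k then 1 else 0) := by
    intro j hj
    obtain ⟨m, hm⟩ : ∃ m, mz[j]? = some m := ⟨_, List.getElem?_eq_getElem (mem_range.1 hj)⟩
    have hs := heightAt_succ hm
    cases m <;> simp only [hm, Move.step] at hs ⊢ <;> split_ifs <;> simp_all <;> omega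
  have htel := sum_range_sub (fun i => if (k : ℤ) ≤ heightAt mz i then (1 : ℤ) else 0) mz.length
  rw [sum_congr rfl hstep, sum_sub_distrib, hend, heightAt_zero, sub_self,
    ← natCast_card_filter, ← natCast_card_filter, sub_eq_zero] at htel
  exact_mod_cast htel

theorem IsMotzkin.prod_up_heights (hmz : IsMotzkin mz) :
    ∏ j ∈ moveIndices mz U, heightAt mz (j + 1) =
      ∏ k ∈ Icc 1 (maxHeight mz), (k : ℤ) ^ peaksAt mz k := by
  have hrange : ∀ j ∈ moveIndices mz U, ∃ k ∈ Icc 1 (maxHeight mz), heightAt mz (j + 1) = k := by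
    intro j hj
    have hstep := heightAt_succ (mem_moveIndices.1 hj)
    simp only [Move.step] at hstep
    exact exists_natCast_mem_Icc (by have := hmz.1 j; omega)
      (heightAt_le_maxHeight (lt_length_of_mem_moveIndices hj))
  rw [prod_comp_natCast_eq_prod_pow_card hrange (fun x => x)]
  simp only [peaksAt, moveIndices, filter_filter]

theorem IsMotzkin.prod_down_heights (hmz : IsMotzkin mz) :
    ∏ j ∈ moveIndices mz D, heightAt mz j =
      ∏ k ∈ Icc 1 (maxHeight mz), (k : ℤ) ^ downsAt mz k := by
  have hrange : ∀ j ∈ moveIndices mz D, ∃ k ∈ Icc 1 (maxHeight mz), heightAt mz j = k := by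
    intro j hj
    have hstep := heightAt_succ (mem_moveIndices.1 hj)
    simp only [Move.step] at hstep
    exact exists_natCast_mem_Icc (by have := hmz.1 (j + 1); omega)
      (heightAt_le_maxHeight (lt_length_of_mem_moveIndices hj).le)
  rw [prod_comp_natCast_eq_prod_pow_card hrange (fun x => x)]
  simp only [downsAt, moveIndices, filter_filter]

theorem IsMotzkin.prod_flat_weights (hmz : IsMotzkin mz) :
    ∏ j ∈ moveIndices mz H, (2 * heightAt mz j + 1) =
      ∏ k ∈ range (maxHeight mz + 1), (2 * (k : ℤ) + 1) ^ flatsAt mz k := by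
  have hrange : ∀ j ∈ moveIndices mz H, ∃ k ∈ Icc 0 (maxHeight mz), heightAt mz j = k :=
    fun j hj => exists_natCast_mem_Icc (by exact_mod_cast hmz.1 j)
      (heightAt_le_maxHeight (lt_length_of_mem_moveIndices hj).le)
  rw [prod_comp_natCast_eq_prod_pow_card hrange (fun x => 2 * x + 1),
    ← Nat.range_succ_eq_Icc_zero]
  simp only [flatsAt, moveIndices, filter_filter]

theorem IsMotzkin.weight_eq_permWeight (hmz : IsMotzkin mz) :
    weight mz = permWeight ⟨maxHeight mz, flatsAt mz, peaksAt mz⟩ := by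
  rw [weight_eq_prod_moveIndices, hmz.prod_up_heights, hmz.prod_down_heights,
    hmz.prod_flat_weights, permWeight]
  simp only [← peaksAt_eq_downsAt hmz.2]
  push_cast
  simp only [pow_mul', prod_pow]
  ring

theorem hasBuildSeq.eq {a : BSeq} (h : hasBuildSeq mz a) :
    a = ⟨maxHeight mz, flatsAt mz, peaksAt mz⟩ := by
  obtain ⟨hh, hf, hp⟩ := h
  cases a
  simp only at hh hf hp
  simp [hh, funext hf, funext hp]

end Path

/-- the weight of a Motzkin path depends only on its building sequence
`a^(mz) = (f_0, p_1, f_1, …, p_h, f_h)`; namely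
`ω(mz) = ∏_{i=0}^h (2i+1)^{f_i} · ∏_{i=1}^h i^{2p_i} = perm(a^(mz))`. -/
theorem weight_eq_permWeight_of_buildSeq (mz : List Move) (hmz : IsMotzkin mz) :
    weight mz = (permWeight (BSeq.mk (maxHeight mz) (flatsAt mz) (peaksAt mz)) : ℤ) ∧
    ∀ a : BSeq, hasBuildSeq mz a → weight mz = (permWeight a : ℤ) := by
  refine ⟨hmz.weight_eq_permWeight, fun a ha => ?_⟩
  rw [ha.eq]
  exact hmz.weight_eq_permWeight
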